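/- Suppose u and v are two linear utility functions representing the same preference relation on lotteries over a countable outcome set containing two non-equivalent outcomes. Then v is a positive affine transformation of u: there exist a > 0 and b ∈ ℝ such that v = a·u + b. -/
import Mathlib


/-- A lottery: a finitely supported nonnegative function summing to 1. -/
def IsLottery {O : Type} (L : O →₀ ℝ) : Prop :=
  (∀ x, 0 ≤ L x) ∧ L.sum (fun _ v => v) = 1

/-- The expected utility of a lottery with respect to outcome utility `u`. -/
noncomputable def Ulot {O : Type} (u : O → ℝ) (L : O →₀ ℝ) : ℝ :=
  L.sum fun x w => w * u x

/-- Dirac lottery. -/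
noncomputable def dl {O : Type} (p : O) : O →₀ ℝ := Finsupp.single p 1

lemma dl_def {O : Type} (p : O) : dl p = Finsupp.single p (1:ℝ) := rfl

lemma lottery_single {O : Type} (p : O) : IsLottery (dl p) := by
  classical
  constructor
  · intro z
    rw [dl_def, Finsupp.single_apply]
    split_ifs <;> norm_num
  · rw [dl_def, Finsupp.sum_single_index rfl]

/-- mixture of two dirac lotteries -/
noncomputable def mix {O : Type} (t : ℝ) (p q : O) : O →₀ ℝ :=
  Finsupp.single p t + Finsupp.single q (1 - t)

lemma mix_lottery {O : Type} {t : ℝ} (h0 : 0 ≤ t) (h1 : t ≤ 1) (p q : O) :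
    IsLottery (mix t p q) := by
  classical
  constructor
  · intro z
    rw [mix, Finsupp.add_apply, Finsupp.single_apply, Finsupp.single_apply]
    split_ifs <;> simp <;> linarith
  · rw [mix, Finsupp.sum_add_index' (h := fun (_ : O) (w : ℝ) => w) (fun a => rfl)
      (fun a b c => rfl), Finsupp.sum_single_index rfl, Finsupp.sum_single_index rfl]
    ring

lemma mix_sum {O : Type} (t : ℝ) (p q : O) (g : O → ℝ) :
    (mix t p q).sum (fun x w => w * g x) = t * g p + (1 - t) * g q := by
  classical
  rw [mix, Finsupp.sum_add_index' (h := fun (x : O) (w : ℝ) => w * g x)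
      (fun a => zero_mul _) (fun a b c => add_mul b c _),
    Finsupp.sum_single_index (h := fun (x : O) (w : ℝ) => w * g x) (zero_mul _),
    Finsupp.sum_single_index (h := fun (x : O) (w : ℝ) => w * g x) (zero_mul _)]

lemma key {O : Type}
    (pref : (O →₀ ℝ) → (O →₀ ℝ) → Prop) (u v : (O →₀ ℝ) → ℝ)
    (hrepu : ∀ L M, IsLottery L → IsLottery M → (pref L M ↔ u M ≤ u L))
    (hrepv : ∀ L M, IsLottery L → IsLottery M → (pref L M ↔ v M ≤ v L))
    (hlinu : ∀ L, IsLottery L → u L = L.sum fun x w => w * u (Finsupp.single x 1))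
    (hlinv : ∀ L, IsLottery L → v L = L.sum fun x w => w * v (Finsupp.single x 1))
    {x y : O} (hxy : u (Finsupp.single y 1) < u (Finsupp.single x 1)) :
    ∃ a b : ℝ, 0 < a ∧ ∀ L, IsLottery L → v L = a * u L + b := by
  classical
  simp only [← dl_def] at *
  -- equal u implies equal v
  have equalv : ∀ L M, IsLottery L → IsLottery M → u L = u M → v L = v M := by
    intro L M hL hM h
    have h1 : pref L M := (hrepu L M hL hM).mpr h.ge
    have h2 : pref M L := (hrepu M L hM hL).mpr h.le
    exact le_antisymm ((hrepv M L hM hL).mp h2) ((hrepv L M hL hM).mp h1)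
  have strictv : ∀ L M, IsLottery L → IsLottery M → u M < u L → v M < v L := by
    intro L M hL hM h
    have hnp : ¬ pref M L := fun hp => absurd ((hrepu M L hM hL).mp hp) (not_le.mpr h)
    exact not_le.mp (fun hv => hnp ((hrepv M L hM hL).mpr hv))
  have hVxy : v (dl y) < v (dl x) :=
    strictv _ _ (lottery_single x) (lottery_single y) hxy
  have hdpos : (0:ℝ) < u (dl x) - u (dl y) := by linarith
  have hd : u (dl x) - u (dl y) ≠ 0 := ne_of_gt hdpos
  have umix : ∀ (t : ℝ) (p q : O), 0 ≤ t → t ≤ 1 →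
      u (mix t p q) = t * u (dl p) + (1 - t) * u (dl q) := by
    intro t p q h0 h1
    rw [hlinu _ (mix_lottery h0 h1 p q)]
    exact mix_sum t p q (fun z => u (dl z))
  have vmix : ∀ (t : ℝ) (p q : O), 0 ≤ t → t ≤ 1 →
      v (mix t p q) = t * v (dl p) + (1 - t) * v (dl q) := by
    intro t p q h0 h1
    rw [hlinv _ (mix_lottery h0 h1 p q)]
    exact mix_sum t p q (fun z => v (dl z))
  set a : ℝ := (v (dl x) - v (dl y)) / (u (dl x) - u (dl y)) with ha
  set b : ℝ := v (dl y) - a * u (dl y) with hb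
  have hapos : 0 < a := div_pos (by linarith) hdpos
  -- pointwise claim
  have hpt : ∀ z : O, v (dl z) = a * u (dl z) + b := by
    intro z
    rcases le_or_gt (u (dl z)) (u (dl y)) with hc3 | hc
    · rcases eq_or_lt_of_le hc3 with hc3 | hc3
      · -- u (dl z) = u (dl y)
        have h' : v (dl z) = v (dl y) :=
          equalv _ _ (lottery_single z) (lottery_single y) hc3
        rw [h', hc3, hb]; ring
      · -- u (dl z) < u (dl y) : y is a mix of x and z
        set s : ℝ := (u (dl y) - u (dl z)) / (u (dl x) - u (dl z)) with hs
        have hdz : (0:ℝ) < u (dl x) - u (dl z) := by linarith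
        have h0 : 0 ≤ s := div_nonneg (by linarith) hdz.le
        have h1 : s ≤ 1 := (div_le_one hdz).mpr (by linarith)
        have hum : u (mix s x z) = u (dl y) := by
          rw [umix s x z h0 h1, hs]; field_simp; ring
        have heq : s * v (dl x) + (1 - s) * v (dl z) = v (dl y) := by
          rw [← vmix s x z h0 h1]
          exact equalv _ _ (mix_lottery h0 h1 x z) (lottery_single y) hum
        have hs1 : (1 : ℝ) - s ≠ 0 := by
          have : s < 1 := (div_lt_one hdz).mpr (by linarith)
          intro h; linarith
        have hVzeq : (1 - s) * v (dl z) = v (dl y) - s * v (dl x) := by linarith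
        have halg : (1 - s) * (a * u (dl z) + b) = v (dl y) - s * v (dl x) := by
          rw [hs, hb, ha]; field_simp; ring
        exact mul_left_cancel₀ hs1 (by rw [hVzeq, halg])
    · rcases le_or_gt (u (dl z)) (u (dl x)) with hc2 | hc2
      · -- between : z is a mix of x and y
        set t : ℝ := (u (dl z) - u (dl y)) / (u (dl x) - u (dl y)) with ht
        have h0 : 0 ≤ t := div_nonneg (by linarith) hdpos.le
        have h1 : t ≤ 1 := (div_le_one hdpos).mpr (by linarith)
        have hum : u (mix t x y) = u (dl z) := by
          rw [umix t x y h0 h1, ht]; field_simp; ring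
        have heq : t * v (dl x) + (1 - t) * v (dl y) = v (dl z) := by
          rw [← vmix t x y h0 h1]
          exact equalv _ _ (mix_lottery h0 h1 x y) (lottery_single z) hum
        rw [← heq, ht, hb, ha]; field_simp; ring
      · -- u (dl x) < u (dl z) : x is a mix of z and y
        set t : ℝ := (u (dl x) - u (dl y)) / (u (dl z) - u (dl y)) with ht
        have hdz : (0:ℝ) < u (dl z) - u (dl y) := by linarith
        have h0 : 0 ≤ t := div_nonneg (by linarith) hdz.le
        have h1 : t ≤ 1 := (div_le_one hdz).mpr (by linarith)
        have hum : u (mix t z y) = u (dl x) := by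
          rw [umix t z y h0 h1, ht]; field_simp; ring
        have heq : t * v (dl z) + (1 - t) * v (dl y) = v (dl x) := by
          rw [← vmix t z y h0 h1]
          exact equalv _ _ (mix_lottery h0 h1 z y) (lottery_single x) hum
        have ht0 : t ≠ 0 := ne_of_gt (div_pos (by linarith) hdz)
        have hVzeq : t * v (dl z) = v (dl x) - (1 - t) * v (dl y) := by linarith
        have halg : t * (a * u (dl z) + b) = v (dl x) - (1 - t) * v (dl y) := by
          rw [ht, hb, ha]; field_simp; ring
        exact mul_left_cancel₀ ht0 (by rw [hVzeq, halg])
  refine ⟨a, b, hapos, ?_⟩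
  intro L hL
  rw [hlinv L hL, hlinu L hL]
  calc L.sum (fun z w => w * v (dl z))
      = L.sum (fun z w => a * (w * u (dl z)) + b * w) := by
        apply Finsupp.sum_congr
        intro z _
        rw [hpt z]; ring
    _ = a * L.sum (fun z w => w * u (dl z)) + b * L.sum (fun z w => w) := by
        rw [Finsupp.sum_add, ← Finsupp.mul_sum, ← Finsupp.mul_sum]
    _ = a * L.sum (fun z w => w * u (dl z)) + b := by
        rw [hL.2, mul_one]

/-- If two linear utility functions `u` and `v` represent the same preference
relation on lotteries over a countable outcome set containing two
non-equivalent outcomes, then `v` is a positive affine transformation of `u`. -/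
theorem linear_utility_unique_up_to_affine {O : Type} [Countable O]
    (pref : (O →₀ ℝ) → (O →₀ ℝ) → Prop) (u v : (O →₀ ℝ) → ℝ)
    (hrepu : ∀ L M, IsLottery L → IsLottery M → (pref L M ↔ u M ≤ u L))
    (hrepv : ∀ L M, IsLottery L → IsLottery M → (pref L M ↔ v M ≤ v L))
    (hlinu : ∀ L, IsLottery L → u L = L.sum fun x w => w * u (Finsupp.single x 1))
    (hlinv : ∀ L, IsLottery L → v L = L.sum fun x w => w * v (Finsupp.single x 1))
    (hxy : ∃ x y : O, u (Finsupp.single x 1) ≠ u (Finsupp.single y 1)) :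
    ∃ a b : ℝ, 0 < a ∧ ∀ L, IsLottery L → v L = a * u L + b := by
  obtain ⟨x, y, hne⟩ := hxy
  rcases lt_trichotomy (u (Finsupp.single y 1)) (u (Finsupp.single x 1)) with h | h | h
  · exact key pref u v hrepu hrepv hlinu hlinv h
  · exact absurd h.symm hne
  · exact key pref u v hrepu hrepv hlinu hlinv h
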